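/- For every natural number n ≥ 1 and every nonzero complex number z, one has z^{−n} = g_{2n}(z) + ∑_{l=0}^{n−1} ( C(2n, n−l) − C(2n, n−l−1) ) · g_{2l}(z), where C(a,b) denotes the binomial coefficient. -/
import Mathlib

noncomputable def G : ℕ → ℂ → ℂ
  | 0, _ => 1
  | 1, _ => 1
  | (n + 2), z => G (n + 1) z - z * G n z

noncomputable def gEven (n : ℕ) (z : ℂ) : ℂ := G (2 * n) z / z ^ n

namespace Aux18

lemma G_add_two (k : ℕ) (z : ℂ) : G (k + 2) z = G (k + 1) z - z * G k z := rfl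

lemma Grec (k : ℕ) (z : ℂ) :
    G (k + 4) z = (1 - 2 * z) * G (k + 2) z - z ^ 2 * G k z := by
  have h4 : G (k + 4) z = G (k + 3) z - z * G (k + 2) z := G_add_two (k + 2) z
  have h3 : G (k + 3) z = G (k + 2) z - z * G (k + 1) z := G_add_two (k + 1) z
  have h2 : G (k + 2) z = G (k + 1) z - z * G k z := G_add_two k z
  rw [h4, h3]
  linear_combination z * h2

lemma gEven_zero (z : ℂ) : gEven 0 z = 1 := by
  simp [gEven]
  rfl

noncomputable def hAux (z : ℂ) : ℕ → ℂ
  | 0 => -1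
  | (k + 1) => gEven k z

lemma gdiv (z : ℂ) (hz : z ≠ 0) (l : ℕ) :
    gEven l z / z = gEven (l + 1) z + 2 * gEven l z + hAux z l := by
  cases l with
  | zero =>
      have h2 : G 2 z = 1 - z := by
        rw [G_add_two 0 z]; norm_num [G]
      have hh : hAux z 0 = -1 := rfl
      simp only [hh, gEven]
      norm_num [G, h2]
      field_simp
      ring
  | succ k =>
      have hh : hAux z (k + 1) = gEven k z := rfl
      rw [hh]
      have h := Grec (2 * k) z
      have e2 : 2 * (k + 1 + 1) = 2 * k + 4 := by ring
      have e1 : 2 * (k + 1) = 2 * k + 2 := by ring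
      simp only [gEven, e2, e1]
      rw [h]
      field_simp
      ring

/-- Ballot-type coefficients without natural subtraction. -/
noncomputable def D (n l : ℕ) : ℂ :=
  ((2 * n).choose (n + l) : ℂ) - ((2 * n).choose (n + l + 1) : ℂ)

lemma D_eq_zero (n : ℕ) {l : ℕ} (h : n < l) : D n l = 0 := by
  rw [D, Nat.choose_eq_zero_of_lt (by omega), Nat.choose_eq_zero_of_lt (by omega)]
  simp

lemma choose_expand (m k : ℕ) :
    ((m + 2).choose (k + 2) : ℂ)
      = (m.choose k : ℂ) + 2 * (m.choose (k + 1) : ℂ) + (m.choose (k + 2) : ℂ) := by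
  have h1 : (m + 2).choose (k + 2) = (m + 1).choose (k + 1) + (m + 1).choose (k + 2) :=
    Nat.choose_succ_succ' (m + 1) (k + 1)
  have h2 : (m + 1).choose (k + 1) = m.choose k + m.choose (k + 1) :=
    Nat.choose_succ_succ' m k
  have h3 : (m + 1).choose (k + 2) = m.choose (k + 1) + m.choose (k + 2) :=
    Nat.choose_succ_succ' m (k + 1)
  rw [h1, h2, h3]
  push_cast
  ring

lemma D_pascal (n l : ℕ) :
    D (n + 1) (l + 1) = D n l + 2 * D n (l + 1) + D n (l + 2) := by
  have e : 2 * (n + 1) = 2 * n + 2 := by ring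
  have e1 : n + 1 + (l + 1) = (n + l) + 2 := by ring
  have e2 : n + 1 + (l + 1) + 1 = (n + l + 1) + 2 := by ring
  rw [D, e, e2, e1, choose_expand, choose_expand]
  simp only [D]
  push_cast
  ring

lemma D_pascal_zero (n : ℕ) : D (n + 1) 0 = D n 0 + D n 1 := by
  have hsym : (2 * n + 1).choose n = (2 * n + 1).choose (n + 1) := by
    have h := Nat.choose_symm (show n ≤ 2 * n + 1 by omega)
    rw [show 2 * n + 1 - n = n + 1 by omega] at h
    exact h.symm
  have h1 : (2 * (n + 1)).choose (n + 1 + 0)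
      = (2 * n + 1).choose n + (2 * n + 1).choose (n + 1) := by
    rw [show 2 * (n + 1) = (2 * n + 1) + 1 by ring, show n + 1 + 0 = n + 1 by ring]
    exact Nat.choose_succ_succ' (2 * n + 1) n
  have h2 : (2 * (n + 1)).choose (n + 1 + 0 + 1)
      = (2 * n + 1).choose (n + 1) + (2 * n + 1).choose (n + 2) := by
    rw [show 2 * (n + 1) = (2 * n + 1) + 1 by ring, show n + 1 + 0 + 1 = (n + 1) + 1 by ring]
    exact Nat.choose_succ_succ' (2 * n + 1) (n + 1)
  have h3 : (2 * n + 1).choose (n + 1) = (2 * n).choose n + (2 * n).choose (n + 1) :=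
    Nat.choose_succ_succ' (2 * n) n
  have h4 : (2 * n + 1).choose (n + 2) = (2 * n).choose (n + 1) + (2 * n).choose (n + 2) :=
    Nat.choose_succ_succ' (2 * n) (n + 1)
  rw [D, h1, h2, hsym, h3, h4]
  simp only [D]
  push_cast
  ring

lemma key (z : ℂ) (hz : z ≠ 0) (n : ℕ) :
    (z⁻¹) ^ n = ∑ l ∈ Finset.range (n + 1), D n l * gEven l z := by
  induction n with
  | zero =>
      simp [D, gEven_zero]
  | succ n ih =>
      have g0 : gEven 0 z = 1 := gEven_zero z
      have step1 : (z⁻¹ : ℂ) ^ (n + 1)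
          = ∑ l ∈ Finset.range (n + 1), D n l * (gEven l z / z) := by
        rw [pow_succ, ih, Finset.sum_mul]
        exact Finset.sum_congr rfl fun l _ => by rw [div_eq_mul_inv, mul_assoc]
      rw [step1]
      have step2 : ∑ l ∈ Finset.range (n + 1), D n l * (gEven l z / z)
          = (∑ l ∈ Finset.range (n + 1), D n l * gEven (l + 1) z)
            + (2 * ∑ l ∈ Finset.range (n + 1), D n l * gEven l z)
            + ∑ l ∈ Finset.range (n + 1), D n l * hAux z l := by
        rw [Finset.mul_sum, ← Finset.sum_add_distrib, ← Finset.sum_add_distrib]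
        exact Finset.sum_congr rfl fun l _ => by rw [gdiv z hz l]; ring
      rw [step2]
      -- right hand side: peel off the l = 0 term and use the Pascal relation
      have hR : ∑ l ∈ Finset.range (n + 1 + 1), D (n + 1) l * gEven l z
          = ((∑ l ∈ Finset.range (n + 1), D n l * gEven (l + 1) z)
              + 2 * (∑ l ∈ Finset.range (n + 1), D n (l + 1) * gEven (l + 1) z)
              + (∑ l ∈ Finset.range (n + 1), D n (l + 2) * gEven (l + 1) z))
            + (D n 0 + D n 1) := by
        rw [Finset.sum_range_succ' (fun l => D (n + 1) l * gEven l z) (n + 1), g0,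
          D_pascal_zero, mul_one]
        congr 1
        rw [Finset.mul_sum, ← Finset.sum_add_distrib, ← Finset.sum_add_distrib]
        exact Finset.sum_congr rfl fun l _ => by rw [D_pascal]; ring
      rw [hR]
      -- relate the middle sums
      have hS2 : ∑ l ∈ Finset.range (n + 1), D n l * gEven l z
          = (∑ l ∈ Finset.range (n + 1), D n (l + 1) * gEven (l + 1) z) + D n 0 := by
        rw [Finset.sum_range_succ' (fun l => D n l * gEven l z) n, g0,
          Finset.sum_range_succ (fun l => D n (l + 1) * gEven (l + 1) z) n,
          D_eq_zero n (show n < n + 1 by omega)]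
        ring
      have hT3 : ∑ l ∈ Finset.range (n + 1), D n l * hAux z l
          = (∑ l ∈ Finset.range (n + 1), D n (l + 2) * gEven (l + 1) z) + D n 1 - D n 0 := by
        rw [Finset.sum_range_succ' (fun l => D n l * hAux z l) n]
        simp only [hAux]
        have e1 : ∑ l ∈ Finset.range n, D n (l + 1) * gEven l z
            = ∑ l ∈ Finset.range (n + 1), D n (l + 1) * gEven l z := by
          rw [Finset.sum_range_succ, D_eq_zero n (show n < n + 1 by omega)]
          ring
        have e2 : ∑ l ∈ Finset.range (n + 1), D n (l + 1) * gEven l z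
            = (∑ l ∈ Finset.range n, D n (l + 2) * gEven (l + 1) z) + D n 1 := by
          rw [Finset.sum_range_succ' (fun l => D n (l + 1) * gEven l z) n, g0]
          ring
        have e3 : ∑ l ∈ Finset.range n, D n (l + 2) * gEven (l + 1) z
            = ∑ l ∈ Finset.range (n + 1), D n (l + 2) * gEven (l + 1) z := by
          rw [Finset.sum_range_succ, D_eq_zero n (show n < n + 2 by omega)]
          ring
        rw [e1, e2, e3]
        ring
      linear_combination 2 * hS2 + hT3

end Aux18

theorem stmt_18 (n : ℕ) (hn : 1 ≤ n) (z : ℂ) (hz : z ≠ 0) :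
    z ^ (-(n : ℤ)) = gEven n z +
      ∑ l ∈ Finset.range n,
        (((2 * n).choose (n - l) : ℂ) - ((2 * n).choose (n - l - 1) : ℂ)) * gEven l z := by
  have hk := Aux18.key z hz n
  rw [zpow_neg, zpow_natCast, ← inv_pow, hk, Finset.sum_range_succ]
  have hDnn : Aux18.D n n = 1 := by
    rw [Aux18.D, show n + n = 2 * n by ring, Nat.choose_self, Nat.choose_succ_self]
    norm_num
  have hcongr : ∀ l ∈ Finset.range n,
      Aux18.D n l * gEven l z
        = (((2 * n).choose (n - l) : ℂ) - ((2 * n).choose (n - l - 1) : ℂ)) * gEven l z := by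
    intro l hl
    rw [Finset.mem_range] at hl
    have h1 : (2 * n).choose (n + l) = (2 * n).choose (n - l) := by
      have h := Nat.choose_symm (show n + l ≤ 2 * n by omega)
      rw [show 2 * n - (n + l) = n - l by omega] at h
      exact h.symm
    have h2 : (2 * n).choose (n + l + 1) = (2 * n).choose (n - l - 1) := by
      have h := Nat.choose_symm (show n + l + 1 ≤ 2 * n by omega)
      rw [show 2 * n - (n + l + 1) = n - l - 1 by omega] at h
      exact h.symm
    rw [Aux18.D, h1, h2]
  rw [Finset.sum_congr rfl hcongr, hDnn, one_mul]
  ring
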